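/- For any finite set Y ⊆ 𝒳 and any weak tournament T with X(T) ⊆ Y, the majority graph of the profile representation of T relative to Y equals T: M(𝔓_Y(T)) = T. -/

import Mathlib

/- Formalization of the profile representation of (weighted) weak tournaments from
Holliday, Norman, Pacuit, Zahedian, "Impossibility theorems involving weakenings of
expansion consistency and resoluteness in voting". Candidates form an infinite
type `C`. -/

open Classical

noncomputable section

/-- `L` is a strict linear order on exactly the finite set `s`. -/
def IsStrictLinearOrderOn {C : Type} (s : Finset C) (L : C → C → Prop) : Prop :=
  (∀ x, ¬ L x x) ∧ (∀ x y z, L x y → L y z → L x z) ∧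
    (∀ x ∈ s, ∀ y ∈ s, x ≠ y → L x y ∨ L y x) ∧ ∀ x y, L x y → x ∈ s ∧ y ∈ s

/-- Restriction of a relation to a finite set `A`. -/
def restrictRel {C : Type} (A : Finset C) (L : C → C → Prop) : C → C → Prop :=
  fun x y => L x y ∧ x ∈ A ∧ y ∈ A

theorem IsStrictLinearOrderOn.restrict {C : Type} {s A : Finset C} {L : C → C → Prop}
    (h : IsStrictLinearOrderOn s L) (hA : A ⊆ s) :
    IsStrictLinearOrderOn A (restrictRel A L) := by
  obtain ⟨hirr, htr, htot, hdom⟩ := h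
  refine ⟨fun x hx => hirr x hx.1,
    fun x y z hxy hyz => ⟨htr _ _ _ hxy.1 hyz.1, hxy.2.1, hyz.2.2⟩, ?_,
    fun x y hxy => ⟨hxy.2.1, hxy.2.2⟩⟩
  intro x hx y hy hne
  rcases htot x (hA hx) y (hA hy) hne with h' | h'
  · exact Or.inl ⟨h', hx, hy⟩
  · exact Or.inr ⟨h', hy, hx⟩

/-- The image of a relation under the transposition of `a` and `b`:
`(x, y) ∈ swapRel a b L` iff `(π x, π y) ∈ L` where `π` swaps `a` and `b`. -/
def swapRel {C : Type} (a b : C) (L : C → C → Prop) : C → C → Prop :=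
  fun x y => L (Equiv.swap a b x) (Equiv.swap a b y)

theorem IsStrictLinearOrderOn.swapRel_mem {C : Type} {s : Finset C} {L : C → C → Prop}
    (a b : C) (h : IsStrictLinearOrderOn s L) :
    IsStrictLinearOrderOn (s.image (Equiv.swap a b)) (swapRel a b L) := by
  obtain ⟨hirr, htr, htot, hdom⟩ := h
  refine ⟨fun x => hirr _, fun x y z hxy hyz => htr _ _ _ hxy hyz, ?_, ?_⟩
  · intro x hx y hy hne
    obtain ⟨x', hx', rfl⟩ := Finset.mem_image.mp hx
    obtain ⟨y', hy', rfl⟩ := Finset.mem_image.mp hy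
    have hne' : x' ≠ y' := by rintro rfl; exact hne rfl
    have := htot x' hx' y' hy' hne'
    simpa [swapRel, Equiv.swap_apply_self] using this
  · intro x y hxy
    obtain ⟨h1, h2⟩ := hdom _ _ hxy
    exact ⟨Finset.mem_image.mpr ⟨_, h1, Equiv.swap_apply_self a b x⟩,
      Finset.mem_image.mpr ⟨_, h2, Equiv.swap_apply_self a b y⟩⟩

theorem IsStrictLinearOrderOn.of_swapRel {C : Type} {s : Finset C} {L : C → C → Prop}
    {a b : C} (h : IsStrictLinearOrderOn s (swapRel a b L)) :
    IsStrictLinearOrderOn (s.image (Equiv.swap a b)) L := by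
  have h2 := h.swapRel_mem a b
  have heq : swapRel a b (swapRel a b L) = L := by
    funext x y
    simp [swapRel, Equiv.swap_apply_self]
  rwa [heq] at h2

/-- A generalized anonymous profile: an integer-valued function on the strict linear
orders of a finite nonempty set of candidates (encoded as a function on all
relations, supported on the strict linear orders of `cands`). -/
structure GAProfile (C : Type) where
  cands : Finset C
  cands_nonempty : cands.Nonempty
  count : (C → C → Prop) → ℤ
  count_supp : ∀ L, count L ≠ 0 → IsStrictLinearOrderOn cands L

namespace GAProfile

variable {C : Type}

/-- `P` is an anonymous profile: all ballot counts are nonnegative. -/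
def IsAnon (P : GAProfile C) : Prop := ∀ L, 0 ≤ P.count L

/-- The margin `μ_{x,y}(P)` of `x` over `y` in `P`. -/
def margin (P : GAProfile C) (x y : C) : ℤ :=
  (∑ᶠ L : C → C → Prop, if L x y then P.count L else 0) -
    ∑ᶠ L : C → C → Prop, if L y x then P.count L else 0

theorem margin_neg (P : GAProfile C) (x y : C) : P.margin y x = - P.margin x y := by
  simp only [margin]
  ring

/-- The restriction `P|_Z` of a generalized anonymous profile to a nonempty subset
`Z` of its candidates. -/
def restrict (P : GAProfile C) (Z : Finset C) (hZ : Z.Nonempty) (hsub : Z ⊆ P.cands) :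
    GAProfile C where
  cands := Z
  cands_nonempty := hZ
  count := fun L => ∑ᶠ L' : C → C → Prop, if restrictRel Z L' = L then P.count L' else 0
  count_supp := by
    intro L hL
    by_contra hnot
    apply hL
    apply finsum_eq_zero_of_forall_eq_zero
    intro L'
    split_ifs with h
    · by_contra hc
      exact hnot (h ▸ ((P.count_supp L' hc).restrict hsub))
    · rfl

/-- The profile `P_{a⇄b}` obtained by transposing the candidates `a` and `b`. -/
def swapCands (P : GAProfile C) (a b : C) : GAProfile C where
  cands := P.cands.image (Equiv.swap a b)
  cands_nonempty := P.cands_nonempty.image _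
  count := fun L => P.count (swapRel a b L)
  count_supp := fun L h => (P.count_supp _ h).of_swapRel

end GAProfile

/-- A weak tournament: an asymmetric directed graph on a finite nonempty set of
vertices. -/
structure WeakTournament (C : Type) where
  verts : Finset C
  verts_nonempty : verts.Nonempty
  edge : C → C → Prop
  edge_asymm : ∀ x y, edge x y → ¬ edge y x
  edge_dom : ∀ x y, edge x y → x ∈ verts ∧ y ∈ verts

/-- A weighted weak tournament: a weak tournament together with a positive integer
weight on each edge (normalized to weight `0` off the edges). -/
structure WeightedWeakTournament (C : Type) where
  verts : Finset C
  verts_nonempty : verts.Nonempty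
  edge : C → C → Prop
  edge_asymm : ∀ x y, edge x y → ¬ edge y x
  edge_dom : ∀ x y, edge x y → x ∈ verts ∧ y ∈ verts
  wt : C → C → ℤ
  wt_pos : ∀ x y, edge x y → 0 < wt x y
  wt_eq_zero : ∀ x y, ¬ edge x y → wt x y = 0

namespace GAProfile

variable {C : Type}

/-- The majority graph `M(P)` of a generalized anonymous profile. -/
def maj (P : GAProfile C) : WeakTournament C where
  verts := P.cands
  verts_nonempty := P.cands_nonempty
  edge := fun x y => 0 < P.margin x y ∧ x ∈ P.cands ∧ y ∈ P.cands
  edge_asymm := by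
    intro x y h h'
    have hneg := P.margin_neg x y
    have h1 := h.1
    have h2 := h'.1
    omega
  edge_dom := fun x y h => ⟨h.2.1, h.2.2⟩

/-- The margin graph `ℳ(P)` of a generalized anonymous profile. -/
def marg (P : GAProfile C) : WeightedWeakTournament C where
  verts := P.cands
  verts_nonempty := P.cands_nonempty
  edge := fun x y => 0 < P.margin x y ∧ x ∈ P.cands ∧ y ∈ P.cands
  edge_asymm := by
    intro x y h h'
    have hneg := P.margin_neg x y
    have h1 := h.1
    have h2 := h'.1
    omega
  edge_dom := fun x y h => ⟨h.2.1, h.2.2⟩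
  wt := fun x y =>
    if 0 < P.margin x y ∧ x ∈ P.cands ∧ y ∈ P.cands then P.margin x y else 0
  wt_pos := by
    intro x y h
    show 0 < if 0 < P.margin x y ∧ x ∈ P.cands ∧ y ∈ P.cands then P.margin x y else 0
    rw [if_pos h]
    exact h.1
  wt_eq_zero := by
    intro x y h
    show (if 0 < P.margin x y ∧ x ∈ P.cands ∧ y ∈ P.cands then P.margin x y else 0) = 0
    exact if_neg h

end GAProfile

/-- The number `ψ_Y = 2 (|Y| − 2)!`. -/
def psi {C : Type} (Y : Finset C) : ℤ := 2 * ((Y.card - 2).factorial : ℤ)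

theorem psi_pos {C : Type} (Y : Finset C) : 0 < psi Y := by
  have h := Nat.factorial_pos (Y.card - 2)
  simp only [psi]
  omega

/-- The count function of the profile `𝐋_Y` consisting of one copy of each linear
order of `Y`. -/
def allOrdersCount {C : Type} (Y : Finset C) (L : C → C → Prop) : ℤ :=
  if IsStrictLinearOrderOn Y L then 1 else 0

/-- `L` ranks `a` first and `b` second among the candidates in `Y`. -/
def firstSecond {C : Type} (Y : Finset C) (a b : C) (L : C → C → Prop) : Prop :=
  (∀ z ∈ Y, z ≠ a → L a z) ∧ ∀ z ∈ Y, z ≠ a → z ≠ b → L b z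

/-- The count function of the `ab`-`Y`-block `𝐋_{ab-Y}`: one copy of each linear
order of `Y` with `a` first and `b` second. -/
def blockCount {C : Type} (Y : Finset C) (a b : C) (L : C → C → Prop) : ℤ :=
  if IsStrictLinearOrderOn Y L ∧ firstSecond Y a b L then 1 else 0

/-- The count function of the profile
`𝔏_Y(T) = 𝐋_Y + Σ_{a→b in T} (𝐋_{ab-Y} − 𝐋_{ba-Y})`. -/
def bigLCount {C : Type} (Y : Finset C) (T : WeakTournament C) : (C → C → Prop) → ℤ :=
  fun L => allOrdersCount Y L +
    ∑ p ∈ T.verts ×ˢ T.verts,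
      (if T.edge p.1 p.2 then blockCount Y p.1 p.2 L - blockCount Y p.2 p.1 L else 0)

/-- The profile `𝔏_Y(T)`. -/
def bigL {C : Type} (Y : Finset C) (T : WeakTournament C) (hsub : T.verts ⊆ Y) :
    GAProfile C where
  cands := Y
  cands_nonempty := by
    obtain ⟨x, hx⟩ := T.verts_nonempty
    exact ⟨x, hsub hx⟩
  count := bigLCount Y T
  count_supp := by
    intro L hL
    by_contra h
    apply hL
    have hb : ∀ a b : C, blockCount Y a b L = 0 := by
      intro a b
      exact if_neg (by exact fun hc => h hc.1)
    simp only [bigLCount, allOrdersCount, if_neg h, zero_add]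
    refine Finset.sum_eq_zero fun p _ => ?_
    rw [hb, hb, sub_self]
    split <;> rfl

/-- The profile representation `𝔓_Y(T) = 𝔏_Y(T)|_{X(T)}` of a weak tournament `T`
relative to `Y`. -/
def profileRep {C : Type} (Y : Finset C) (T : WeakTournament C) (hsub : T.verts ⊆ Y) :
    GAProfile C :=
  (bigL Y T hsub).restrict T.verts T.verts_nonempty hsub

/-- The count function of the profile
`𝔏_{Y,m}(𝒯) = m𝐋_Y + Σ_{a→b in 𝒯 with weight kψ_Y} (k𝐋_{ab-Y} − k𝐋_{ba-Y})`. -/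
def bigLWCount {C : Type} (Y : Finset C) (m : ℕ) (T : WeightedWeakTournament C) :
    (C → C → Prop) → ℤ :=
  fun L => (m : ℤ) * allOrdersCount Y L +
    ∑ p ∈ T.verts ×ˢ T.verts,
      (if T.edge p.1 p.2 then
        (T.wt p.1 p.2 / psi Y) * (blockCount Y p.1 p.2 L - blockCount Y p.2 p.1 L)
      else 0)

/-- The profile `𝔏_{Y,m}(𝒯)`. -/
def bigLW {C : Type} (Y : Finset C) (m : ℕ) (T : WeightedWeakTournament C)
    (hsub : T.verts ⊆ Y) : GAProfile C where
  cands := Y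
  cands_nonempty := by
    obtain ⟨x, hx⟩ := T.verts_nonempty
    exact ⟨x, hsub hx⟩
  count := bigLWCount Y m T
  count_supp := by
    intro L hL
    by_contra h
    apply hL
    have hb : ∀ a b : C, blockCount Y a b L = 0 := by
      intro a b
      exact if_neg (by exact fun hc => h hc.1)
    simp only [bigLWCount, allOrdersCount, if_neg h, mul_zero, zero_add]
    refine Finset.sum_eq_zero fun p _ => ?_
    rw [hb, hb, sub_self, mul_zero]
    split <;> rfl

/-- The profile representation `𝔓_{Y,m}(𝒯) = 𝔏_{Y,m}(𝒯)|_{X(𝒯)}` of a weighted weak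
tournament `𝒯` relative to `Y` and `m`. -/
def profileRepW {C : Type} (Y : Finset C) (m : ℕ) (T : WeightedWeakTournament C)
    (hsub : T.verts ⊆ Y) : GAProfile C :=
  (bigLW Y m T hsub).restrict T.verts T.verts_nonempty hsub

/-- Membership in `𝕎𝕋^w_{Y,m}`: a weighted weak tournament on vertices included in
`Y`, each of whose weights is `kψ_Y` for some positive `k ≤ m`. -/
def MemWTw {C : Type} (Y : Finset C) (m : ℕ) (T : WeightedWeakTournament C) : Prop :=
  T.verts ⊆ Y ∧
    ∀ a b, T.edge a b → ∃ k : ℕ, 0 < k ∧ k ≤ m ∧ T.wt a b = (k : ℤ) * psi Y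
/- Margins are linear in the profile and are not changed by restricting it to `X(T)`.
The transposition of `x` and `y` fixes `𝐋_Y` and reverses the margin of `x` over `y`, so
`𝐋_Y` contributes nothing. The transposition of `a` and `b` maps `𝐋_{ab-Y}` onto `𝐋_{ba-Y}`,
and in both blocks `a` and `b` beat every other candidate; hence `𝐋_{ab-Y} − 𝐋_{ba-Y}` has
margin `0` on every pair other than `{a, b}`, and margin `2 |𝐋_{ab-Y}| > 0` of `a` over `b`. -/

namespace IsStrictLinearOrderOn

variable {C : Type} {s : Finset C} {L : C → C → Prop}

theorem asymm (h : IsStrictLinearOrderOn s L) {x y : C} (hxy : L x y) : ¬ L y x :=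
  fun hyx => h.1 x (h.2.1 x y x hxy hyx)

theorem of_injective {α : Type} [LinearOrder α] {f : C → α} (hf : Function.Injective f)
    (s : Finset C) : IsStrictLinearOrderOn s (fun x y => x ∈ s ∧ y ∈ s ∧ f x < f y) := by
  refine ⟨fun x h => h.2.2.false, fun x y z hxy hyz => ⟨hxy.1, hyz.2.1, hxy.2.2.trans hyz.2.2⟩,
    fun x hx y hy hne => ?_, fun x y h => ⟨h.1, h.2.1⟩⟩
  rcases (hf.ne hne).lt_or_gt with h | h
  · exact Or.inl ⟨hx, hy, h⟩
  · exact Or.inr ⟨hy, hx, h⟩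

end IsStrictLinearOrderOn

section LinOrders

variable {C : Type} {s : Finset C} {L : C → C → Prop} {x y : C}

theorem finite_setOf_isStrictLinearOrderOn (s : Finset C) :
    {L : C → C → Prop | IsStrictLinearOrderOn s L}.Finite := by
  refine Set.Finite.of_finite_image (f := fun L (x y : s) => L x y) (Set.toFinite _) ?_
  intro L hL L' hL' h
  have hs : ∀ x ∈ s, ∀ y ∈ s, L x y = L' x y :=
    fun x hx y hy => congrFun (congrFun h ⟨x, hx⟩) ⟨y, hy⟩
  ext x y
  constructor
  · intro hxy
    obtain ⟨hx, hy⟩ := hL.2.2.2 x y hxy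
    rwa [← hs x hx y hy]
  · intro hxy
    obtain ⟨hx, hy⟩ := hL'.2.2.2 x y hxy
    rwa [hs x hx y hy]

/-- The finite set `𝓛(s)` of strict linear orders on `s`. -/
def linOrders (s : Finset C) : Finset (C → C → Prop) :=
  (finite_setOf_isStrictLinearOrderOn s).toFinset

theorem mem_linOrders : L ∈ linOrders s ↔ IsStrictLinearOrderOn s L :=
  Set.Finite.mem_toFinset _

def prefSign (L : C → C → Prop) (x y : C) : ℤ :=
  (if L x y then 1 else 0) - (if L y x then 1 else 0)

theorem prefSign_comm (L : C → C → Prop) (x y : C) : prefSign L y x = - prefSign L x y := by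
  simp only [prefSign]
  ring

def marginOn (s : Finset C) (x y : C) : ((C → C → Prop) → ℤ) →ₗ[ℤ] ℤ where
  toFun c := ∑ L ∈ linOrders s, c L * prefSign L x y
  map_add' c d := by simp only [Pi.add_apply, add_mul, Finset.sum_add_distrib]
  map_smul' n c := by simp only [Pi.smul_apply, smul_eq_mul, mul_assoc, ← Finset.mul_sum,
    RingHom.id_apply]

theorem marginOn_apply (c : (C → C → Prop) → ℤ) :
    marginOn s x y c = ∑ L ∈ linOrders s, c L * prefSign L x y :=
  rfl

theorem marginOn_comm (c : (C → C → Prop) → ℤ) : marginOn s y x c = - marginOn s x y c := by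
  rw [marginOn_apply, marginOn_apply, ← Finset.sum_neg_distrib]
  exact Finset.sum_congr rfl fun L _ => by rw [prefSign_comm, mul_neg]

theorem marginOn_self (c : (C → C → Prop) → ℤ) : marginOn s x x c = 0 := by
  have h := marginOn_comm (s := s) (x := x) (y := x) c
  omega

end LinOrders

namespace GAProfile

variable {C : Type}

theorem support_ite_count_subset (P : GAProfile C) (p : (C → C → Prop) → Prop) :
    Function.support (fun L => if p L then P.count L else 0) ⊆ linOrders P.cands := by
  intro L hL
  refine mem_linOrders.mpr (P.count_supp L fun h => hL ?_)
  simp [h]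

theorem margin_eq_marginOn (P : GAProfile C) (x y : C) :
    P.margin x y = marginOn P.cands x y P.count := by
  rw [margin, finsum_eq_sum_of_support_subset _ (P.support_ite_count_subset _),
    finsum_eq_sum_of_support_subset _ (P.support_ite_count_subset _), ← Finset.sum_sub_distrib]
  refine Finset.sum_congr rfl fun L _ => ?_
  simp only [prefSign]
  split_ifs <;> ring

theorem restrict_count (P : GAProfile C) (Z : Finset C) (hZ : Z.Nonempty) (hsub : Z ⊆ P.cands)
    (M : C → C → Prop) :
    (P.restrict Z hZ hsub).count M =
      ∑ L ∈ linOrders P.cands with restrictRel Z L = M, P.count L := by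
  rw [Finset.sum_filter]
  exact finsum_eq_sum_of_support_subset _ (P.support_ite_count_subset _)

theorem margin_restrict (P : GAProfile C) (Z : Finset C) (hZ : Z.Nonempty) (hsub : Z ⊆ P.cands)
    {x y : C} (hx : x ∈ Z) (hy : y ∈ Z) :
    (P.restrict Z hZ hsub).margin x y = P.margin x y := by
  have hsign : ∀ L, prefSign (restrictRel Z L) x y = prefSign L x y := fun L => by
    simp only [prefSign, restrictRel, hx, hy, and_true]
  have hmaps : ∀ L ∈ linOrders P.cands, restrictRel Z L ∈ linOrders Z :=
    fun L hL => mem_linOrders.mpr ((mem_linOrders.mp hL).restrict hsub)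
  rw [margin_eq_marginOn, margin_eq_marginOn, marginOn_apply, marginOn_apply]
  calc ∑ M ∈ linOrders Z, (P.restrict Z hZ hsub).count M * prefSign M x y
      = ∑ M ∈ linOrders Z, ∑ L ∈ linOrders P.cands with restrictRel Z L = M,
          P.count L * prefSign (restrictRel Z L) x y := by
        refine Finset.sum_congr rfl fun M _ => ?_
        rw [restrict_count, Finset.sum_mul]
        refine Finset.sum_congr rfl fun L hL => ?_
        rw [(Finset.mem_filter.mp hL).2]
    _ = ∑ L ∈ linOrders P.cands, P.count L * prefSign L x y := by
        rw [Finset.sum_fiberwise_of_maps_to hmaps]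
        simp only [hsign]

end GAProfile

section Swap

variable {C : Type} {s : Finset C} {u v : C}

theorem image_swap_of_mem (hu : u ∈ s) (hv : v ∈ s) : s.image (Equiv.swap u v) = s :=
  Finset.coe_injective <| by
    push_cast
    exact (Equiv.swap_bijOn_self (iff_of_true hu hv)).image_eq

theorem swapRel_swapRel (u v : C) (L : C → C → Prop) : swapRel u v (swapRel u v L) = L := by
  funext x y
  simp [swapRel]

theorem isStrictLinearOrderOn_swapRel_iff (hu : u ∈ s) (hv : v ∈ s) {L : C → C → Prop} :
    IsStrictLinearOrderOn s (swapRel u v L) ↔ IsStrictLinearOrderOn s L := by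
  refine ⟨fun h => ?_, fun h => ?_⟩
  · simpa [image_swap_of_mem hu hv] using h.of_swapRel
  · simpa [image_swap_of_mem hu hv] using h.swapRel_mem u v

theorem marginOn_comp_swapRel (hu : u ∈ s) (hv : v ∈ s) (c : (C → C → Prop) → ℤ) (x y : C) :
    marginOn s x y (fun L => c (swapRel u v L)) =
      marginOn s (Equiv.swap u v x) (Equiv.swap u v y) c := by
  have hmem : ∀ L ∈ linOrders s, swapRel u v L ∈ linOrders s := fun L hL =>
    mem_linOrders.mpr ((isStrictLinearOrderOn_swapRel_iff hu hv).mpr (mem_linOrders.mp hL))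
  refine Finset.sum_nbij' (swapRel u v) (swapRel u v) hmem hmem
    (fun L _ => swapRel_swapRel u v L) (fun L _ => swapRel_swapRel u v L) fun L _ => ?_
  simp [prefSign, swapRel]

theorem allOrdersCount_comp_swapRel (hu : u ∈ s) (hv : v ∈ s) :
    (fun L => allOrdersCount s (swapRel u v L)) = allOrdersCount s := by
  funext L
  simp only [allOrdersCount, isStrictLinearOrderOn_swapRel_iff hu hv]

/-- `𝐋_Y` is invariant under the transposition of `x` and `y`, which reverses the margin of
`x` over `y`. -/
theorem marginOn_allOrdersCount {x y : C} (hx : x ∈ s) (hy : y ∈ s) :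
    marginOn s x y (allOrdersCount s) = 0 := by
  have h := marginOn_comp_swapRel hx hy (allOrdersCount s) x y
  rw [allOrdersCount_comp_swapRel hx hy, Equiv.swap_apply_left, Equiv.swap_apply_right,
    marginOn_comm (x := x) (y := y)] at h
  omega

theorem firstSecond_swapRel (hu : u ∈ s) (hv : v ∈ s) (a b : C) (L : C → C → Prop) :
    firstSecond s a b (swapRel u v L) ↔
      firstSecond s (Equiv.swap u v a) (Equiv.swap u v b) L := by
  simp only [firstSecond, swapRel]
  conv_rhs => rw [← image_swap_of_mem hu hv]
  simp

theorem blockCount_swapRel (hu : u ∈ s) (hv : v ∈ s) (a b : C) (L : C → C → Prop) :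
    blockCount s a b (swapRel u v L) = blockCount s (Equiv.swap u v a) (Equiv.swap u v b) L := by
  simp only [blockCount, isStrictLinearOrderOn_swapRel_iff hu hv, firstSecond_swapRel hu hv]

end Swap

section Blocks

variable {C : Type} {s : Finset C} {a b x y : C}

def blockSize (s : Finset C) (a b : C) : ℤ :=
  ∑ L ∈ linOrders s, blockCount s a b L

theorem exists_firstSecond (ha : a ∈ s) (hb : b ∈ s) :
    ∃ L, IsStrictLinearOrderOn s L ∧ firstSecond s a b L := by
  let _ : LinearOrder C := IsWellOrder.linearOrder WellOrderingRel
  let rank : C → ℕ := fun z => if z = a then 0 else if z = b then 1 else 2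
  let key : C → Lex (ℕ × C) := fun z => toLex (rank z, z)
  have hkey : Function.Injective key := fun z w h => congrArg (fun p => (ofLex p).2) h
  refine ⟨_, IsStrictLinearOrderOn.of_injective hkey s, ?_, ?_⟩
  · intro z hz hza
    refine ⟨ha, hz, ?_⟩
    simp only [key, rank, Prod.Lex.toLex_lt_toLex, if_neg hza]
    exact Or.inl (by split_ifs <;> norm_num)
  · intro z hz hza hzb
    refine ⟨hb, hz, ?_⟩
    simp only [key, rank, Prod.Lex.toLex_lt_toLex, if_neg hza, if_neg hzb]
    exact Or.inl (by split_ifs <;> norm_num)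

theorem blockCount_nonneg (s : Finset C) (a b : C) (L : C → C → Prop) :
    0 ≤ blockCount s a b L := by
  unfold blockCount
  split_ifs <;> simp

theorem blockSize_pos (ha : a ∈ s) (hb : b ∈ s) : 0 < blockSize s a b := by
  obtain ⟨L, hL, hfs⟩ := exists_firstSecond ha hb
  calc (0 : ℤ) < blockCount s a b L := by simp [blockCount, hL, hfs]
    _ ≤ blockSize s a b :=
        Finset.single_le_sum (fun L _ => blockCount_nonneg s a b L) (mem_linOrders.mpr hL)

theorem marginOn_blockCount_of_forall
    (h : ∀ L, IsStrictLinearOrderOn s L → firstSecond s a b L → L x y) :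
    marginOn s x y (blockCount s a b) = blockSize s a b := by
  refine Finset.sum_congr rfl fun L _ => ?_
  by_cases hL : IsStrictLinearOrderOn s L ∧ firstSecond s a b L
  · simp [blockCount, hL, prefSign, h L hL.1 hL.2, hL.1.asymm (h L hL.1 hL.2)]
  · simp [blockCount, hL]

theorem marginOn_blockCount_of_top (hx : x = a ∨ x = b) (hy : y ∈ s) (hya : y ≠ a)
    (hyb : y ≠ b) : marginOn s x y (blockCount s a b) = blockSize s a b := by
  refine marginOn_blockCount_of_forall fun L _ hfs => ?_
  rcases hx with rfl | rfl
  · exact hfs.1 y hy hya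
  · exact hfs.2 y hy hya hyb

/-- `𝐋_{ba-Y}` is the image of `𝐋_{ab-Y}` under the transposition of `a` and `b`. -/
theorem marginOn_blockCount_sub (ha : a ∈ s) (hb : b ∈ s) :
    marginOn s x y (blockCount s a b - blockCount s b a) =
      marginOn s x y (blockCount s a b) -
        marginOn s (Equiv.swap a b x) (Equiv.swap a b y) (blockCount s a b) := by
  have hba : blockCount s b a = fun L => blockCount s a b (swapRel a b L) := by
    funext L
    rw [blockCount_swapRel ha hb, Equiv.swap_apply_left, Equiv.swap_apply_right]
  rw [map_sub, hba, marginOn_comp_swapRel ha hb]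

theorem marginOn_blockCount_sub_self (ha : a ∈ s) (hb : b ∈ s) (hab : a ≠ b) :
    marginOn s a b (blockCount s a b - blockCount s b a) = 2 * blockSize s a b := by
  have hmarg : marginOn s a b (blockCount s a b) = blockSize s a b :=
    marginOn_blockCount_of_forall fun L _ hfs => hfs.1 b hb hab.symm
  rw [marginOn_blockCount_sub ha hb, Equiv.swap_apply_left, Equiv.swap_apply_right,
    marginOn_comm (x := a) (y := b), hmarg]
  ring

theorem marginOn_blockCount_sub_eq_zero (ha : a ∈ s) (hb : b ∈ s) (hx : x ∈ s) (hy : y ∈ s)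
    (h₁ : (x, y) ≠ (a, b)) (h₂ : (x, y) ≠ (b, a)) :
    marginOn s x y (blockCount s a b - blockCount s b a) = 0 := by
  rw [marginOn_blockCount_sub ha hb]
  rcases eq_or_ne x y with rfl | hxy
  · rw [marginOn_self, marginOn_self, sub_self]
  have htop : ∀ {z w}, (z = a ∨ z = b) → w ∈ s → w ≠ a → w ≠ b →
      marginOn s z w (blockCount s a b) =
        marginOn s (Equiv.swap a b z) (Equiv.swap a b w) (blockCount s a b) := by
    intro z w hz hw hwa hwb
    have hσz : Equiv.swap a b z = a ∨ Equiv.swap a b z = b := by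
      rcases hz with rfl | rfl <;> simp
    rw [Equiv.swap_apply_of_ne_of_ne hwa hwb, marginOn_blockCount_of_top hz hw hwa hwb,
      marginOn_blockCount_of_top hσz hw hwa hwb]
  by_cases hxab : x = a ∨ x = b
  · have hy' : y ≠ a ∧ y ≠ b := by
      rcases hxab with rfl | rfl <;> exact ⟨by rintro rfl; simp_all, by rintro rfl; simp_all⟩
    rw [htop hxab hy hy'.1 hy'.2, sub_self]
  push Not at hxab
  by_cases hyab : y = a ∨ y = b
  · rw [marginOn_comm (x := y) (y := x), marginOn_comm (x := Equiv.swap a b y),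
      htop hyab hx hxab.1 hxab.2, sub_neg_eq_add, neg_add_cancel]
  push Not at hyab
  rw [Equiv.swap_apply_of_ne_of_ne hxab.1 hxab.2, Equiv.swap_apply_of_ne_of_ne hyab.1 hyab.2,
    sub_self]

end Blocks

theorem WeakTournament.ext {C : Type} {T₁ T₂ : WeakTournament C} (hv : T₁.verts = T₂.verts)
    (he : T₁.edge = T₂.edge) : T₁ = T₂ := by
  cases T₁
  cases T₂
  subst hv he
  rfl

theorem WeakTournament.ne_of_edge {C : Type} (T : WeakTournament C) {x y : C}
    (h : T.edge x y) : x ≠ y := by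
  rintro rfl
  exact T.edge_asymm x x h h

section BigL

variable {C : Type} {Y : Finset C} {T : WeakTournament C} {x y : C}

theorem bigLCount_eq (Y : Finset C) (T : WeakTournament C) :
    bigLCount Y T = allOrdersCount Y + ∑ p ∈ T.verts ×ˢ T.verts,
      if T.edge p.1 p.2 then blockCount Y p.1 p.2 - blockCount Y p.2 p.1 else 0 := by
  funext L
  simp [bigLCount, Finset.sum_apply, ite_apply]

theorem margin_bigL (hsub : T.verts ⊆ Y) (hx : x ∈ Y) (hy : y ∈ Y) :
    (bigL Y T hsub).margin x y = ∑ p ∈ T.verts ×ˢ T.verts,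
      if T.edge p.1 p.2 then marginOn Y x y (blockCount Y p.1 p.2 - blockCount Y p.2 p.1)
      else 0 := by
  rw [GAProfile.margin_eq_marginOn]
  change marginOn Y x y (bigLCount Y T) = _
  rw [bigLCount_eq, map_add, map_sum, marginOn_allOrdersCount hx hy, zero_add]
  refine Finset.sum_congr rfl fun p _ => ?_
  split_ifs <;> simp

theorem margin_bigL_pos (hsub : T.verts ⊆ Y) (h : T.edge x y) :
    0 < (bigL Y T hsub).margin x y := by
  obtain ⟨hx, hy⟩ := T.edge_dom x y h
  rw [margin_bigL hsub (hsub hx) (hsub hy),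
    Finset.sum_eq_single_of_mem (x, y) (Finset.mem_product.mpr ⟨hx, hy⟩), if_pos h,
    marginOn_blockCount_sub_self (hsub hx) (hsub hy) (T.ne_of_edge h)]
  · have := blockSize_pos (hsub hx) (hsub hy)
    omega
  · rintro ⟨a, b⟩ hp hne
    split_ifs with hab
    · obtain ⟨ha, hb⟩ := Finset.mem_product.mp hp
      refine marginOn_blockCount_sub_eq_zero (hsub ha) (hsub hb) (hsub hx) (hsub hy)
        (Ne.symm hne) ?_
      rintro ⟨⟩
      exact T.edge_asymm _ _ h hab
    · rfl

theorem margin_bigL_eq_zero (hsub : T.verts ⊆ Y) (hx : x ∈ Y) (hy : y ∈ Y)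
    (hxy : ¬ T.edge x y) (hyx : ¬ T.edge y x) : (bigL Y T hsub).margin x y = 0 := by
  rw [margin_bigL hsub hx hy]
  refine Finset.sum_eq_zero fun ⟨a, b⟩ hp => ?_
  split_ifs with hab
  · obtain ⟨ha, hb⟩ := Finset.mem_product.mp hp
    refine marginOn_blockCount_sub_eq_zero (hsub ha) (hsub hb) hx hy ?_ ?_ <;>
      rintro ⟨⟩ <;> contradiction
  · rfl

theorem edge_iff_margin_bigL_pos (hsub : T.verts ⊆ Y) (hx : x ∈ Y) (hy : y ∈ Y) :
    T.edge x y ↔ 0 < (bigL Y T hsub).margin x y := by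
  refine ⟨margin_bigL_pos hsub, fun hpos => ?_⟩
  by_contra hxy
  by_cases hyx : T.edge y x
  · have := margin_bigL_pos hsub hyx
    rw [GAProfile.margin_neg] at this
    omega
  · rw [margin_bigL_eq_zero hsub hx hy hxy hyx] at hpos
    exact hpos.false

theorem margin_profileRep (hsub : T.verts ⊆ Y) (hx : x ∈ T.verts) (hy : y ∈ T.verts) :
    (profileRep Y T hsub).margin x y = (bigL Y T hsub).margin x y :=
  GAProfile.margin_restrict _ _ _ _ hx hy

end BigL

theorem maj_profileRep_general (C : Type) (Y : Finset C) (T : WeakTournament C)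
    (hsub : T.verts ⊆ Y) :
    (profileRep Y T hsub).maj = T := by
  refine WeakTournament.ext rfl ?_
  ext x y
  change 0 < (profileRep Y T hsub).margin x y ∧ x ∈ T.verts ∧ y ∈ T.verts ↔ T.edge x y
  constructor
  · rintro ⟨hpos, hx, hy⟩
    rw [margin_profileRep hsub hx hy] at hpos
    exact (edge_iff_margin_bigL_pos hsub (hsub hx) (hsub hy)).mpr hpos
  · intro h
    obtain ⟨hx, hy⟩ := T.edge_dom x y h
    refine ⟨?_, hx, hy⟩
    rw [margin_profileRep hsub hx hy]
    exact margin_bigL_pos hsub h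

/-- For any finite set `Y` of candidates and any weak tournament `T`
with `X(T) ⊆ Y`, the majority graph of the profile representation of `T` relative to
`Y` equals `T`: `M(𝔓_Y(T)) = T`. -/
theorem maj_profileRep (C : Type) [Infinite C] (Y : Finset C) (T : WeakTournament C)
    (hsub : T.verts ⊆ Y) :
    (profileRep Y T hsub).maj = T :=
  maj_profileRep_general C Y T hsub
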